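/- arXiv:1905.11783 — 4 statements merged into one kernel-verified Lean document; each statement's English description precedes it below -/
import Mathlib

section
/- Let A be a real skew-symmetric d × d matrix (Aᵀ = −A). Then there exist an orthogonal d × d matrix Q and real numbers λ₀, …, λ_{m−1}, where m = ⌊d/2⌋, such that Qᵀ A Q is the block-diagonal matrix B whose only nonzero entries are B(2i, 2i+1) = λᵢ and B(2i+1, 2i) = −λᵢ for i = 0, …, m−1 (all other entries of B are zero; in particular, when d is odd, the last row and column of B are zero). -/
/-!
`A` defines a skew-symmetric operator `T` on Euclidean space. The operator `T²` is symmetric, and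
if `T ≠ 0` it has an eigenvector `u` with nonzero eigenvalue, necessarily `-c²` with `c = ‖T u‖`
because `⟪u, T² u⟫ = -‖T u‖²`. Then `u` and `w = -c⁻¹ T u` are orthonormal with `T u = -c w` and
`T w = c u`, so they span a `T`-invariant plane; by skew-symmetry its orthogonal complement is
`T`-invariant as well, and induction on the dimension handles the complement. When `T = 0` any
orthonormal basis works, with all rates zero.
-/

open Matrix Module
open scoped RealInnerProductSpace

/-- The rates form a sequence rather than a `Fin (d / 2)`-tuple, so that the indices carry no
bounds. -/
def skewBlockEntry (lam : ℕ → ℝ) (i j : ℕ) : ℝ :=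
  if i % 2 = 0 ∧ j = i + 1 then lam (i / 2)
  else if j % 2 = 0 ∧ i = j + 1 then -lam (j / 2) else 0

theorem skewBlockEntry_two_add (lam : ℕ → ℝ) (i j : ℕ) :
    skewBlockEntry lam (2 + i) (2 + j) = skewBlockEntry (fun k => lam (k + 1)) i j := by
  unfold skewBlockEntry
  split_ifs <;> first | rfl | omega | (congr 1; omega) | (congr 2; omega)

theorem skewBlockEntry_eq_zero_of_div_two_ne (lam : ℕ → ℝ) {i j : ℕ} (h : i / 2 ≠ j / 2) :
    skewBlockEntry lam i j = 0 := by
  unfold skewBlockEntry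
  split_ifs <;> first | rfl | omega

theorem Orthonormal.fin_append {𝕜 E : Type*} [RCLike 𝕜] [NormedAddCommGroup E]
    [InnerProductSpace 𝕜 E] {m n : ℕ} {u : Fin m → E} {v : Fin n → E} (hu : Orthonormal 𝕜 u)
    (hv : Orthonormal 𝕜 v) (huv : ∀ i j, inner 𝕜 (u i) (v j) = 0) :
    Orthonormal 𝕜 (Fin.append u v) := by
  classical
  rw [orthonormal_iff_ite] at *
  intro i j
  refine Fin.addCases (fun a => ?_) (fun k => ?_) i <;>
    refine Fin.addCases (fun b => ?_) (fun l => ?_) j <;>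
    simp [hu, hv, huv, inner_eq_zero_symm.mp (huv _ _), Fin.ext_iff] <;> omega

namespace LinearMap

theorem span_range_le_comap_of_rotation_pair {R M : Type*} [Ring R] [AddCommGroup M]
    [Module R M] {T : M →ₗ[R] M} {e : Fin 2 → M} {c : R} (hTe0 : T (e 0) = -c • e 1)
    (hTe1 : T (e 1) = c • e 0) :
    Submodule.span R (Set.range e) ≤ (Submodule.span R (Set.range e)).comap T :=
  Submodule.span_le.2 <| Set.range_subset_iff.2 fun i => by
    have hmem (j : Fin 2) : e j ∈ Submodule.span R (Set.range e) :=
      Submodule.subset_span ⟨j, rfl⟩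
    fin_cases i
    · simpa [hTe0] using Submodule.smul_mem _ (-c) (hmem 1)
    · simpa [hTe1] using Submodule.smul_mem _ c (hmem 0)

variable {E : Type*} [NormedAddCommGroup E] [InnerProductSpace ℝ E]

def IsSkewSymmetric (T : E →ₗ[ℝ] E) : Prop :=
  ∀ x y, ⟪T x, y⟫ = -⟪x, T y⟫

namespace IsSkewSymmetric

variable {T : E →ₗ[ℝ] E}

theorem norm_apply_sq (hT : T.IsSkewSymmetric) (x : E) : ‖T x‖ ^ 2 = -⟪x, T (T x)⟫ := by
  rw [← real_inner_self_eq_norm_sq, hT]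

theorem inner_apply_self (hT : T.IsSkewSymmetric) (x : E) : ⟪x, T x⟫ = 0 := by
  linarith [hT x x, real_inner_comm x (T x)]

theorem isSymmetric_mul_self (hT : T.IsSkewSymmetric) : (T * T).IsSymmetric := fun x y => by
  rw [Module.End.mul_apply, Module.End.mul_apply, hT, hT, neg_neg]

theorem restrict (hT : T.IsSkewSymmetric) {K : Submodule ℝ E} (hK : ∀ x ∈ K, T x ∈ K) :
    (T.restrict hK).IsSkewSymmetric :=
  fun x y => hT x y

theorem apply_mem_orthogonal (hT : T.IsSkewSymmetric) {K : Submodule ℝ E}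
    (hK : K ≤ K.comap T) {x : E} (hx : x ∈ Kᗮ) : T x ∈ Kᗮ := fun y hy => by
  linarith [hT y x, Submodule.inner_right_of_mem_orthogonal (show T y ∈ K from hK hy) hx]

theorem exists_orthonormal_rotation_pair [FiniteDimensional ℝ E] (hT : T.IsSkewSymmetric)
    (hT0 : T ≠ 0) :
    ∃ (e : Fin 2 → E) (c : ℝ), Orthonormal ℝ e ∧ T (e 0) = -c • e 1 ∧ T (e 1) = c • e 0 := by
  have hS := hT.isSymmetric_mul_self
  obtain ⟨i, hi⟩ : ∃ i, hS.eigenvalues rfl i ≠ 0 := by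
    by_contra! h
    have hS0 : T * T = 0 := (hS.eigenvectorBasis rfl).toBasis.ext fun i => by
      simp [hS.apply_eigenvectorBasis, h]
    refine hT0 (LinearMap.ext fun x => ?_)
    have := hT.norm_apply_sq x
    rw [← Module.End.mul_apply, hS0] at this
    simpa using this
  set u := hS.eigenvectorBasis rfl i
  set μ := hS.eigenvalues rfl i
  have hTTu : T (T u) = μ • u := hS.apply_eigenvectorBasis rfl i
  have hu : ‖u‖ = 1 := (hS.eigenvectorBasis rfl).orthonormal.1 i
  set c := ‖T u‖
  have hc : c ^ 2 = -μ := by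
    rw [hT.norm_apply_sq, hTTu, real_inner_smul_right, real_inner_self_eq_norm_sq, hu]
    ring
  have hc0 : c ≠ 0 := fun h => hi (by simpa [h] using hc)
  refine ⟨![u, -c⁻¹ • T u], c, ?_, by simp [smul_smul, hc0], ?_⟩
  · have hcpos : 0 < c := (norm_nonneg _).lt_of_ne' hc0
    simp [orthonormal_vecCons_iff, hu, norm_smul, real_inner_smul_right, hT.inner_apply_self,
      abs_of_pos hcpos]
    exact inv_mul_cancel₀ hc0
  · simp only [cons_val_one, cons_val_zero, map_smul, map_neg, hTTu, smul_smul, neg_smul]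
    rw [← neg_smul, show μ = -c ^ 2 by linarith]
    congr 1
    field_simp

theorem exists_orthonormal_inner_apply_eq_skewBlockEntry [FiniteDimensional ℝ E]
    (hT : T.IsSkewSymmetric) {n : ℕ} (hn : finrank ℝ E = n) :
    ∃ (v : Fin n → E) (lam : ℕ → ℝ),
      Orthonormal ℝ v ∧ ∀ i j, ⟪v i, T (v j)⟫ = skewBlockEntry lam i j := by
  induction n using Nat.strong_induction_on generalizing E with
  | _ n ih =>
  by_cases hT0 : T = 0
  · subst hn
    exact ⟨stdOrthonormalBasis ℝ E, 0, (stdOrthonormalBasis ℝ E).orthonormal,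
      by simp [hT0, skewBlockEntry]⟩
  obtain ⟨e, c, he, hTe0, hTe1⟩ := hT.exists_orthonormal_rotation_pair hT0
  set K := Submodule.span ℝ (Set.range e)
  have hK : K ≤ K.comap T := span_range_le_comap_of_rotation_pair hTe0 hTe1
  have hKperp : ∀ x ∈ Kᗮ, T x ∈ Kᗮ := fun x => hT.apply_mem_orthogonal hK
  have hdim : 2 + finrank ℝ Kᗮ = n := by
    rw [← hn, ← K.finrank_add_finrank_orthogonal, finrank_span_eq_card he.linearIndependent,
      Fintype.card_fin]
  obtain ⟨v, lam, hv, hvT⟩ := ih _ (by omega) (hT.restrict hKperp) rfl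
  subst hdim
  refine ⟨Fin.append e (fun k => (v k : E)), fun k => if k = 0 then c else lam (k - 1),
    he.fin_append (hv.comp_linearIsometry Kᗮ.subtypeₗᵢ) fun i j =>
      Submodule.inner_right_of_mem_orthogonal (K := K) (Submodule.subset_span ⟨i, rfl⟩) (v j).2,
    fun i j => ?_⟩
  refine Fin.addCases (fun a => ?_) (fun k => ?_) i <;>
    refine Fin.addCases (fun b => ?_) (fun l => ?_) j
  · have he' := orthonormal_iff_ite.1 he
    fin_cases a <;> fin_cases b <;>
      simp [hTe0, hTe1, real_inner_smul_right, he', he.1, skewBlockEntry]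
  · simp only [Fin.append_left, Fin.append_right, Fin.val_castAdd, Fin.val_natAdd]
    rw [skewBlockEntry_eq_zero_of_div_two_ne _ (by omega)]
    exact Submodule.inner_right_of_mem_orthogonal (K := K) (Submodule.subset_span ⟨a, rfl⟩)
      (hKperp _ (v l).2)
  · simp only [Fin.append_left, Fin.append_right, Fin.val_castAdd, Fin.val_natAdd]
    rw [skewBlockEntry_eq_zero_of_div_two_ne _ (by omega)]
    exact Submodule.inner_left_of_mem_orthogonal
      (show T (e b) ∈ K from hK (Submodule.subset_span ⟨b, rfl⟩)) (v k).2
  · simp only [Fin.append_right, Fin.val_natAdd, skewBlockEntry_two_add]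
    simpa using hvT k l

end IsSkewSymmetric

end LinearMap

theorem isSkewSymmetric_toEuclideanLin {m : Type*} [Fintype m] [DecidableEq m]
    {A : Matrix m m ℝ} (hA : Aᵀ = -A) : (toEuclideanLin A).IsSkewSymmetric := fun x y => by
  simp only [EuclideanSpace.inner_eq_star_dotProduct, toLpLin_apply, star_trivial]
  rw [dotProduct_mulVec, ← mulVec_transpose, hA, neg_mulVec, neg_dotProduct, dotProduct_comm]

theorem transpose_mul_mul_apply_eq_inner {m n : Type*} [Fintype m] [DecidableEq m]
    (v : n → EuclideanSpace ℝ m) (A : Matrix m m ℝ) (i j : n) :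
    ((of fun i j => v j i)ᵀ * A * of fun i j => v j i) i j = ⟪v i, toEuclideanLin A (v j)⟫ := by
  simp only [EuclideanSpace.inner_eq_star_dotProduct, dotProduct, mul_apply, mulVec,
    Finset.sum_mul, transpose_apply, of_apply, toLpLin_apply, star_trivial]
  rw [Finset.sum_comm]
  exact Finset.sum_congr rfl fun _ _ => Finset.sum_congr rfl fun _ _ => by ring

theorem transpose_mul_apply_eq_inner {m n : Type*} [Fintype m] (v : n → EuclideanSpace ℝ m)
    (i j : n) : ((of fun i j => v j i)ᵀ * of fun i j => v j i) i j = ⟪v i, v j⟫ := by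
  simp [EuclideanSpace.inner_eq_star_dotProduct, dotProduct, mul_apply, mul_comm]

/-- Spectral (block-diagonalization) theorem for real skew-symmetric
matrices: `QᵀAQ` is block diagonal with `2×2` antisymmetric rotation blocks with rates
`λᵢ`, `i = 0, …, ⌊d/2⌋ - 1`, and (for odd `d`) a final zero row and column. -/
theorem skewSymmetric_block_diagonalization
    (d : ℕ) (A : Matrix (Fin d) (Fin d) ℝ) (hA : Aᵀ = -A) :
    ∃ (Q : Matrix (Fin d) (Fin d) ℝ) (lam : Fin (d / 2) → ℝ),
      Qᵀ * Q = 1 ∧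
      Qᵀ * A * Q = Matrix.of (fun i j : Fin d =>
        if h : (i : ℕ) % 2 = 0 ∧ (j : ℕ) = (i : ℕ) + 1 then
          lam ⟨(i : ℕ) / 2, by have hi := i.isLt; have hj := j.isLt; omega⟩
        else if h' : (j : ℕ) % 2 = 0 ∧ (i : ℕ) = (j : ℕ) + 1 then
          -lam ⟨(j : ℕ) / 2, by have hi := i.isLt; have hj := j.isLt; omega⟩
        else 0) := by
  obtain ⟨v, lam, hv, hvA⟩ := (isSkewSymmetric_toEuclideanLin hA)
    |>.exists_orthonormal_inner_apply_eq_skewBlockEntry finrank_euclideanSpace_fin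
  refine ⟨of fun i j => v j i, fun k => lam k, ?_, ?_⟩
  · ext i j
    rw [transpose_mul_apply_eq_inner, orthonormal_iff_ite.1 hv, one_apply]
  · ext i j
    rw [transpose_mul_mul_apply_eq_inner, hvA, skewBlockEntry]
    simp only [of_apply, dite_eq_ite]
end

section
/- Generalized Kelvin circulation theorem in a rotating frame in ℝ^d: let A be a real skew-symmetric d × d matrix, let u : ℝ × ℝ^d → ℝ^d be a continuously differentiable time-dependent velocity field and p : ℝ × ℝ^d → ℝ a continuously differentiable pressure satisfying the Euler equation with Coriolis force ∂_t u(t,x) + (u(t,x)·∇) u(t,x) + 2 A u(t,x) = −∇p(t,x) for all (t,x). Let Φ : ℝ × ℝ^d → ℝ^d be a twice continuously differentiable flow map with Φ(0,x) = x and ∂_t Φ(t,x) = u(t, Φ(t,x)) for all (t,x), and let γ : ℝ → ℝ^d be a continuously differentiable loop with γ(s+1) = γ(s). Then the absolute circulation t ↦ ∫₀¹ ⟨ u(t, Φ(t, γ(s))) + A Φ(t, γ(s)), ∂_s [Φ(t, γ(s))] ⟩ ds is constant in t. -/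
/-!
Write `c(t, s) = Φ(t, γ s)` for the material loop and `q = ∂ₛc` for its tangent. Since `∂ₜc = u(t, c)`
and mixed partials of `Φ` commute, `∂ₜq = ∂ₛ(u(t, c))`. Differentiating the circulation density
`⟨u + A c, q⟩` in `t`, the Euler equation turns the material derivative of `u` into `-2 A u - ∇p`,
and skew-symmetry of `A` makes the result exact:
`∂ₜ⟨u + A c, q⟩ = ∂ₛ(-p + |u|²/2 + ⟨A c, u⟩)`.
Its integral over the closed loop vanishes, so the circulation has zero time derivative.
-/

open Matrix

section PartialDerivatives

variable {𝕜 E F G : Type*} [NontriviallyNormedField 𝕜] [NormedAddCommGroup E] [NormedSpace 𝕜 E]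
  [NormedAddCommGroup F] [NormedSpace 𝕜 F] [NormedAddCommGroup G] [NormedSpace 𝕜 G]

theorem HasFDerivAt.partial_fst {f : E × F → G} {f' : E × F →L[𝕜] G} {x : E} {y : F}
    (hf : HasFDerivAt f f' (x, y)) :
    HasFDerivAt (fun x' => f (x', y)) (f'.comp (.inl 𝕜 E F)) x :=
  hf.comp x (hasFDerivAt_prodMk_left x y)

theorem HasFDerivAt.partial_snd {f : E × F → G} {f' : E × F →L[𝕜] G} {x : E} {y : F}
    (hf : HasFDerivAt f f' (x, y)) :
    HasFDerivAt (fun y' => f (x, y')) (f'.comp (.inr 𝕜 E F)) y :=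
  hf.comp y (hasFDerivAt_prodMk_right x y)

theorem deriv_partial_fst {f : 𝕜 × F → G} {t : 𝕜} {y : F} (hf : DifferentiableAt 𝕜 f (t, y)) :
    deriv (fun t' => f (t', y)) t = fderiv 𝕜 f (t, y) (1, 0) := by
  simpa using hf.hasFDerivAt.partial_fst.hasDerivAt.deriv

theorem fderiv_partial_snd_apply {f : E × F → G} {x : E} {y : F}
    (hf : DifferentiableAt 𝕜 f (x, y)) (v : F) :
    fderiv 𝕜 (fun y' => f (x, y')) y v = fderiv 𝕜 f (x, y) (0, v) := by
  simp [hf.hasFDerivAt.partial_snd.fderiv]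

end PartialDerivatives

theorem hasDerivAt_fderiv_flow {E : Type*} [NormedAddCommGroup E] [NormedSpace ℝ E]
    {Φ u : ℝ × E → E} (hΦ : ContDiff ℝ 2 Φ) (hu : Differentiable ℝ u)
    (hflow : ∀ t x, deriv (fun s => Φ (s, x)) t = u (t, Φ (t, x))) (t : ℝ) (x v : E) :
    HasDerivAt (fun s => fderiv ℝ Φ (s, x) (0, v))
      (fderiv ℝ u (t, Φ (t, x)) (0, fderiv ℝ Φ (t, x) (0, v))) t := by
  have hΦ' : ∀ z, HasFDerivAt Φ (fderiv ℝ Φ z) z := fun z =>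
    (hΦ.differentiable two_ne_zero z).hasFDerivAt
  have hΦ'' : HasFDerivAt (fderiv ℝ Φ) (fderiv ℝ (fderiv ℝ Φ) (t, x)) (t, x) :=
    ((hΦ.fderiv_right one_add_one_eq_two.le).differentiable one_ne_zero _).hasFDerivAt
  have hvel : (fun z => fderiv ℝ Φ z (1, 0)) = fun z => u (z.1, Φ z) := by
    ext1 ⟨s, y⟩
    rw [← deriv_partial_fst (hΦ' _).differentiableAt, hflow]
  have hvel' : HasFDerivAt (fun z => u (z.1, Φ z))
      ((fderiv ℝ u (t, Φ (t, x))).comp ((ContinuousLinearMap.fst ℝ ℝ E).prod (fderiv ℝ Φ (t, x))))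
      (t, x) :=
    (hu _).hasFDerivAt.comp (t, x) (hasFDerivAt_fst.prodMk (hΦ' _))
  -- Differentiate the velocity `z ↦ DΦ z (1, 0)` in direction `(0, v)`, then swap by symmetry.
  have hmixed : fderiv ℝ (fderiv ℝ Φ) (t, x) (0, v) (1, 0) =
      fderiv ℝ u (t, Φ (t, x)) (0, fderiv ℝ Φ (t, x) (0, v)) := by
    have := (hΦ''.clm_apply (hasFDerivAt_const ((1 : ℝ), (0 : E)) (t, x)))
    rw [hvel] at this
    simpa using congrArg (· ((0 : ℝ), v)) (this.unique hvel')
  rw [← hmixed, ← (hΦ.contDiffAt.isSymmSndFDerivAt (by simp)).eq]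
  simpa using (hΦ''.partial_fst.hasDerivAt).clm_apply (hasDerivAt_const t ((0 : ℝ), v))

section Coordinates

variable {ι : Type*} [Fintype ι]

theorem ContinuousLinearMap.apply_eq_sum_single [DecidableEq ι] {M : Type*} [AddCommGroup M]
    [Module ℝ M] [TopologicalSpace M] (L : (ι → ℝ) →L[ℝ] M) (v : ι → ℝ) :
    L v = ∑ j, v j • L (Pi.single j 1) := by
  conv_lhs => rw [pi_eq_sum_univ' v]
  simp only [map_sum, map_smul]

theorem HasDerivAt.dotProduct {f g : ℝ → ι → ℝ} {f' g' : ι → ℝ} {x : ℝ}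
    (hf : HasDerivAt f f' x) (hg : HasDerivAt g g' x) :
    HasDerivAt (fun y => f y ⬝ᵥ g y) (f' ⬝ᵥ g x + f x ⬝ᵥ g') x := by
  simp only [_root_.dotProduct, ← Finset.sum_add_distrib]
  exact HasDerivAt.fun_sum fun i _ => (hasDerivAt_pi.1 hf i).mul (hasDerivAt_pi.1 hg i)

theorem HasDerivAt.mulVec (A : Matrix ι ι ℝ) {f : ℝ → ι → ℝ} {f' : ι → ℝ} {x : ℝ}
    (hf : HasDerivAt f f' x) : HasDerivAt (fun y => A *ᵥ f y) (A *ᵥ f') x :=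
  (Matrix.mulVecLin A).toContinuousLinearMap.hasFDerivAt.comp_hasDerivAt x hf

theorem dotProduct_mulVec_of_transpose_eq_neg {A : Matrix ι ι ℝ} (hA : Aᵀ = -A) (v w : ι → ℝ) :
    A *ᵥ v ⬝ᵥ w = -(A *ᵥ w ⬝ᵥ v) := by
  rw [dotProduct_comm, dotProduct_mulVec, ← mulVec_transpose, hA, neg_mulVec, neg_dotProduct]

end Coordinates

section Euler

variable {ι : Type*} [Fintype ι] [DecidableEq ι] {A : Matrix ι ι ℝ}
  {u : ℝ × (ι → ℝ) → ι → ℝ} {p : ℝ × (ι → ℝ) → ℝ}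

theorem euler_coriolis_material_apply (hu : Differentiable ℝ u) (hp : Differentiable ℝ p)
    (heuler : ∀ (t : ℝ) (x : ι → ℝ) (i : ι),
      deriv (fun s => u (s, x) i) t +
        (∑ j, u (t, x) j * fderiv ℝ (fun y => u (t, y) i) x (Pi.single j 1)) +
        2 * A.mulVec (u (t, x)) i =
      -(fderiv ℝ (fun y => p (t, y)) x (Pi.single i 1)))
    (t : ℝ) (x : ι → ℝ) (i : ι) :
    fderiv ℝ u (t, x) (1, u (t, x)) i + 2 * (A *ᵥ u (t, x)) i =
      -fderiv ℝ p (t, x) (0, Pi.single i 1) := by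
  have hDu := (hu (t, x)).hasFDerivAt
  have htime : deriv (fun s => u (s, x) i) t = fderiv ℝ u (t, x) (1, 0) i := by
    simpa using (hasDerivAt_pi.1 hDu.partial_fst.hasDerivAt i).deriv
  have hspace : ∀ v, fderiv ℝ (fun y => u (t, y) i) x v = fderiv ℝ u (t, x) (0, v) i := fun v => by
    simp [(hasFDerivAt_pi'.1 hDu.partial_snd i).fderiv]
  have hsplit : fderiv ℝ u (t, x) (1, u (t, x)) =
      fderiv ℝ u (t, x) (1, 0) + ∑ j, u (t, x) j • fderiv ℝ u (t, x) (0, Pi.single j 1) := by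
    have hpair : ((1 : ℝ), u (t, x)) = (1, 0) + (0, u (t, x)) := by simp
    rw [hpair, map_add]
    exact congrArg _ (((fderiv ℝ u (t, x)).comp (.inr ℝ ℝ (ι → ℝ))).apply_eq_sum_single _)
  have h := heuler t x i
  rw [htime, fderiv_partial_snd_apply (hp (t, x))] at h
  simp only [hspace] at h
  simp only [hsplit, Pi.add_apply, Finset.sum_apply, Pi.smul_apply, smul_eq_mul]
  linarith

theorem euler_coriolis_material_dotProduct
    (heuler : ∀ t x i, fderiv ℝ u (t, x) (1, u (t, x)) i + 2 * (A *ᵥ u (t, x)) i =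
      -fderiv ℝ p (t, x) (0, Pi.single i 1))
    (t : ℝ) (x w : ι → ℝ) :
    fderiv ℝ u (t, x) (1, u (t, x)) ⬝ᵥ w + 2 * (A *ᵥ u (t, x) ⬝ᵥ w) +
      fderiv ℝ p (t, x) (0, w) = 0 := by
  rw [show ((0 : ℝ), w) = ContinuousLinearMap.inr ℝ ℝ (ι → ℝ) w from rfl,
    ← ContinuousLinearMap.comp_apply, ContinuousLinearMap.apply_eq_sum_single]
  simp only [_root_.dotProduct, Finset.mul_sum, ← Finset.sum_add_distrib]
  refine Finset.sum_eq_zero fun i _ => ?_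
  have := heuler t x i
  simp only [ContinuousLinearMap.comp_apply, ContinuousLinearMap.inr_apply, smul_eq_mul]
  linear_combination w i * this

end Euler

section IntegralsDependingOnAParameter

variable {E : Type*} [NormedAddCommGroup E] [NormedSpace ℝ E]

theorem hasDerivAt_intervalIntegral_of_continuous_deriv {F F' : ℝ → ℝ → E} {a b t₀ : ℝ}
    (hF : ∀ t, Continuous (F t)) (hF' : Continuous (Function.uncurry F'))
    (hderiv : ∀ t s, HasDerivAt (F · s) (F' t s) t) :
    HasDerivAt (fun t => ∫ s in a..b, F t s) (∫ s in a..b, F' t₀ s) t₀ := by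
  obtain ⟨C, hC⟩ := ((isCompact_closedBall t₀ 1).prod (isCompact_uIcc (a := a) (b := b)))
    |>.exists_bound_of_continuousOn hF'.continuousOn
  have hbound : ∀ s ∈ Set.uIoc a b, ∀ t ∈ Metric.ball t₀ 1, ‖F' t s‖ ≤ C := fun s hs t ht =>
    hC (t, s) ⟨Metric.ball_subset_closedBall ht, Set.uIoc_subset_uIcc hs⟩
  exact (intervalIntegral.hasDerivAt_integral_of_dominated_loc_of_deriv_le
    (Metric.ball_mem_nhds t₀ one_pos) (.of_forall fun t => (hF t).aestronglyMeasurable)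
    ((hF t₀).intervalIntegrable a b) (hF'.uncurry_left t₀).aestronglyMeasurable
    (.of_forall hbound) intervalIntegrable_const
    (.of_forall fun s _ t _ => hderiv t s)).2

theorem intervalIntegral_eq_of_hasDerivAt_param_eq_hasDerivAt [CompleteSpace E]
    {F F' G : ℝ → ℝ → E} {a b : ℝ}
    (hF : ∀ t, Continuous (F t)) (hF' : Continuous (Function.uncurry F'))
    (hFt : ∀ t s, HasDerivAt (F · s) (F' t s) t) (hGs : ∀ t s, HasDerivAt (G t) (F' t s) s)
    (hG : ∀ t, G t b = G t a) (t₁ t₂ : ℝ) :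
    ∫ s in a..b, F t₁ s = ∫ s in a..b, F t₂ s := by
  have hzero : ∀ t, ∫ s in a..b, F' t s = 0 := fun t => by
    rw [intervalIntegral.integral_eq_sub_of_hasDerivAt (fun s _ => hGs t s)
      ((hF'.uncurry_left t).intervalIntegrable a b), hG, sub_self]
  exact is_const_of_deriv_eq_zero
    (fun t => (hasDerivAt_intervalIntegral_of_continuous_deriv hF hF' hFt).differentiableAt)
    (fun t => by rw [(hasDerivAt_intervalIntegral_of_continuous_deriv hF hF' hFt).deriv, hzero]) t₁ t₂

end IntegralsDependingOnAParameter

section Circulation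

variable {ι : Type*} [Fintype ι]

theorem circulation_eq_of_euler_coriolis {A : Matrix ι ι ℝ} (hA : Aᵀ = -A)
    {u : ℝ × (ι → ℝ) → ι → ℝ} {p : ℝ × (ι → ℝ) → ℝ} (hu : ContDiff ℝ 1 u)
    (hp : Differentiable ℝ p)
    (heuler : ∀ t x w, fderiv ℝ u (t, x) (1, u (t, x)) ⬝ᵥ w + 2 * (A *ᵥ u (t, x) ⬝ᵥ w) +
      fderiv ℝ p (t, x) (0, w) = 0)
    {c q : ℝ → ℝ → ι → ℝ} {a b : ℝ} (hc : Continuous (Function.uncurry c))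
    (hq : Continuous (Function.uncurry q))
    (hct : ∀ t s, HasDerivAt (c · s) (u (t, c t s)) t) (hcs : ∀ t s, HasDerivAt (c t) (q t s) s)
    (hqt : ∀ t s, HasDerivAt (q · s) (fderiv ℝ u (t, c t s) (0, q t s)) t)
    (hper : ∀ t, c t b = c t a) (t₁ t₂ : ℝ) :
    ∫ s in a..b, (u (t₁, c t₁ s) + A *ᵥ c t₁ s) ⬝ᵥ q t₁ s =
      ∫ s in a..b, (u (t₂, c t₂ s) + A *ᵥ c t₂ s) ⬝ᵥ q t₂ s := by
  have hDu : ∀ z, HasFDerivAt u (fderiv ℝ u z) z := fun z =>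
    (hu.differentiable one_ne_zero z).hasFDerivAt
  have hut : ∀ t s, HasDerivAt (fun t' => u (t', c t' s))
      (fderiv ℝ u (t, c t s) (1, u (t, c t s))) t := fun t s =>
    (hDu _).comp_hasDerivAt t ((hasDerivAt_id t).prodMk (hct t s))
  have hus : ∀ t s, HasDerivAt (fun s' => u (t, c t s')) (fderiv ℝ u (t, c t s) (0, q t s)) s :=
    fun t s => (hDu _).comp_hasDerivAt s ((hasDerivAt_const s t).prodMk (hcs t s))
  have hps : ∀ t s, HasDerivAt (fun s' => p (t, c t s')) (fderiv ℝ p (t, c t s) (0, q t s)) s :=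
    fun t s => (hp _).hasFDerivAt.comp_hasDerivAt s ((hasDerivAt_const s t).prodMk (hcs t s))
  refine intervalIntegral_eq_of_hasDerivAt_param_eq_hasDerivAt
    (F := fun t s => (u (t, c t s) + A *ᵥ c t s) ⬝ᵥ q t s)
    (F' := fun t s => (fderiv ℝ u (t, c t s) (1, u (t, c t s)) + A *ᵥ u (t, c t s)) ⬝ᵥ q t s +
      (u (t, c t s) + A *ᵥ c t s) ⬝ᵥ fderiv ℝ u (t, c t s) (0, q t s))
    (G := fun t s => -p (t, c t s) + u (t, c t s) ⬝ᵥ u (t, c t s) / 2 + A *ᵥ c t s ⬝ᵥ u (t, c t s))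
    (fun t => ?_) ?_ (fun t s => ?_) (fun t s => ?_) (fun t => by simp only [hper]) t₁ t₂
  · have := hc.uncurry_left t
    have := hq.uncurry_left t
    fun_prop
  · have := hu.continuous_fderiv one_ne_zero
    fun_prop
  · exact ((hut t s).add ((hct t s).mulVec A)).dotProduct (hqt t s)
  · convert (((hps t s).fun_neg.fun_add (((hus t s).dotProduct (hus t s)).div_const 2)).fun_add
      (((hcs t s).mulVec A).dotProduct (hus t s))) using 1
    have := heuler t (c t s) (q t s)
    rw [dotProduct_mulVec_of_transpose_eq_neg hA, dotProduct_comm (fderiv ℝ u _ _)]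
    simp only [add_dotProduct]
    linarith

end Circulation

theorem kelvin_circulation_rotating_frame_general
    (d : ℕ) (A : Matrix (Fin d) (Fin d) ℝ) (hA : Aᵀ = -A)
    (u : ℝ × (Fin d → ℝ) → (Fin d → ℝ)) (hu : ContDiff ℝ 1 u)
    (p : ℝ × (Fin d → ℝ) → ℝ) (hp : ContDiff ℝ 1 p)
    (heuler : ∀ (t : ℝ) (x : Fin d → ℝ) (i : Fin d),
      deriv (fun s => u (s, x) i) t +
        (∑ j, u (t, x) j * fderiv ℝ (fun y => u (t, y) i) x (Pi.single j 1)) +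
        2 * A.mulVec (u (t, x)) i =
      -(fderiv ℝ (fun y => p (t, y)) x (Pi.single i 1)))
    (Φ : ℝ × (Fin d → ℝ) → (Fin d → ℝ)) (hΦ : ContDiff ℝ 2 Φ)
    (hflow : ∀ (t : ℝ) (x : Fin d → ℝ), deriv (fun s => Φ (s, x)) t = u (t, Φ (t, x)))
    (γ : ℝ → Fin d → ℝ) (hγ : ContDiff ℝ 1 γ) (hper : ∀ s, γ (s + 1) = γ s)
    (t₁ t₂ : ℝ) :
    (∫ s in (0:ℝ)..1, ∑ i,
        (u (t₁, Φ (t₁, γ s)) i + A.mulVec (Φ (t₁, γ s)) i) *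
          deriv (fun s' => Φ (t₁, γ s')) s i) =
    (∫ s in (0:ℝ)..1, ∑ i,
        (u (t₂, Φ (t₂, γ s)) i + A.mulVec (Φ (t₂, γ s)) i) *
          deriv (fun s' => Φ (t₂, γ s')) s i) := by
  have hu' := hu.differentiable one_ne_zero
  have hp' := hp.differentiable one_ne_zero
  have hΦ' : ∀ z, HasFDerivAt Φ (fderiv ℝ Φ z) z := fun z =>
    (hΦ.differentiable two_ne_zero z).hasFDerivAt
  have hloop_t : ∀ t s, HasDerivAt (fun t' => Φ (t', γ s)) (u (t, Φ (t, γ s))) t := fun t s =>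
    hflow t (γ s) ▸ ((hΦ' _).partial_fst.differentiableAt.hasDerivAt)
  have hloop_s : ∀ t s, HasDerivAt (fun s' => Φ (t, γ s')) (fderiv ℝ Φ (t, γ s) (0, deriv γ s)) s :=
    fun t s => (hΦ' _).comp_hasDerivAt s ((hasDerivAt_const s t).prodMk
      (hγ.differentiable one_ne_zero s).hasDerivAt)
  have hcirc := circulation_eq_of_euler_coriolis hA hu hp'
    (euler_coriolis_material_dotProduct
      (euler_coriolis_material_apply hu' hp' heuler))
    (c := fun t s => Φ (t, γ s)) (q := fun t s => fderiv ℝ Φ (t, γ s) (0, deriv γ s))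
    (by have := hγ.continuous; fun_prop)
    (by have := hΦ.continuous_fderiv two_ne_zero; have := hγ.continuous_deriv le_rfl; fun_prop)
    hloop_t hloop_s (fun t s => hasDerivAt_fderiv_flow hΦ hu' hflow t (γ s) _)
    (fun t => by simpa using congrArg (fun y => Φ (t, y)) (hper 0)) t₁ t₂
  simpa only [dotProduct, Pi.add_apply, (hloop_s _ _).deriv] using hcirc

/-- Generalized Kelvin circulation theorem in a rotating frame in `ℝ^d`:
for a solution `(u, p)` of the Euler equation with Coriolis force `2 A u` (where `A` is
skew-symmetric), the circulation of the absolute velocity `u + A x` around any material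
loop transported by the flow map `Φ` is constant in time. -/
theorem kelvin_circulation_rotating_frame
    (d : ℕ) (A : Matrix (Fin d) (Fin d) ℝ) (hA : Aᵀ = -A)
    (u : ℝ × (Fin d → ℝ) → (Fin d → ℝ)) (hu : ContDiff ℝ 1 u)
    (p : ℝ × (Fin d → ℝ) → ℝ) (hp : ContDiff ℝ 1 p)
    (heuler : ∀ (t : ℝ) (x : Fin d → ℝ) (i : Fin d),
      deriv (fun s => u (s, x) i) t +
        (∑ j, u (t, x) j * fderiv ℝ (fun y => u (t, y) i) x (Pi.single j 1)) +
        2 * A.mulVec (u (t, x)) i =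
      -(fderiv ℝ (fun y => p (t, y)) x (Pi.single i 1)))
    (Φ : ℝ × (Fin d → ℝ) → (Fin d → ℝ)) (hΦ : ContDiff ℝ 2 Φ)
    (hΦ0 : ∀ x, Φ (0, x) = x)
    (hflow : ∀ (t : ℝ) (x : Fin d → ℝ), deriv (fun s => Φ (s, x)) t = u (t, Φ (t, x)))
    (γ : ℝ → Fin d → ℝ) (hγ : ContDiff ℝ 1 γ) (hper : ∀ s, γ (s + 1) = γ s)
    (t₁ t₂ : ℝ) :
    (∫ s in (0:ℝ)..1, ∑ i,
        (u (t₁, Φ (t₁, γ s)) i + A.mulVec (Φ (t₁, γ s)) i) *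
          deriv (fun s' => Φ (t₁, γ s')) s i) =
    (∫ s in (0:ℝ)..1, ∑ i,
        (u (t₂, Φ (t₂, γ s)) i + A.mulVec (Φ (t₂, γ s)) i) *
          deriv (fun s' => Φ (t₂, γ s')) s i) :=
  kelvin_circulation_rotating_frame_general d A hA u hu p hp heuler Φ hΦ hflow γ hγ hper t₁ t₂
end

section
/- Taylor–Proudman theorem in ℝ⁴ with simultaneously fast double rotation: let λ₁, λ₂ ∈ ℝ with λ₁ ≠ 0 and λ₂ ≠ 0, let u : ℝ⁴ → ℝ⁴ be continuously differentiable and Π : ℝ⁴ → ℝ twice continuously differentiable such that 2(−λ₁ u₂(x), λ₁ u₁(x), −λ₂ u₄(x), λ₂ u₃(x)) = −∇Π(x) for all x ∈ ℝ⁴. Then everywhere: u_{1,1} + u_{2,2} = 0, u_{3,3} + u_{4,4} = 0 (incompressibility within each rotating plane), and the cross-plane relations λ₁ u_{1,3} + λ₂ u_{4,2} = 0, λ₁ u_{2,3} − λ₂ u_{4,1} = 0, λ₁ u_{1,4} − λ₂ u_{3,2} = 0, λ₁ u_{2,4} + λ₂ u_{3,1} = 0. -/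
/-
Geostrophic balance expresses each velocity component as a multiple of a partial derivative
of the pressure: `u₁ = -∂₂Π/(2λ₁)`, `u₂ = ∂₁Π/(2λ₁)`, `u₃ = -∂₄Π/(2λ₂)`, `u₄ = ∂₃Π/(2λ₂)`.
Every first-order partial of `u` is therefore a multiple of an entry of the Hessian of `Π`,
and all six relations reduce to the symmetry of that Hessian.
-/

/-- The partial derivative `∂ᵢ f` of a scalar function on `ℝ^n` at `x`. -/
noncomputable def pd {n : ℕ} (i : Fin n) (f : (Fin n → ℝ) → ℝ) (x : Fin n → ℝ) : ℝ :=
  fderiv ℝ f x (Pi.single i 1)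

section PartialDerivatives

variable {n : ℕ}

theorem pd_eq_apply_comp_fderiv (j : Fin n) (f : (Fin n → ℝ) → ℝ) :
    pd j f = ContinuousLinearMap.apply ℝ ℝ (Pi.single j 1) ∘ fderiv ℝ f :=
  rfl

theorem pd_const_mul {j : Fin n} {g : (Fin n → ℝ) → ℝ} {x : Fin n → ℝ}
    (hg : DifferentiableAt ℝ g x) (c : ℝ) :
    pd j (fun y => c * g y) x = c * pd j g x := by
  simp [pd, fderiv_const_mul hg c]

theorem differentiableAt_fderiv_of_contDiff_two {f : (Fin n → ℝ) → ℝ} (hf : ContDiff ℝ 2 f)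
    (x : Fin n → ℝ) : DifferentiableAt ℝ (fderiv ℝ f) x :=
  (hf.fderiv_right (m := 1) le_rfl).differentiable one_ne_zero x

theorem differentiableAt_pd {f : (Fin n → ℝ) → ℝ} (hf : ContDiff ℝ 2 f) (j : Fin n)
    (x : Fin n → ℝ) : DifferentiableAt ℝ (pd j f) x := by
  rw [pd_eq_apply_comp_fderiv]
  exact (ContinuousLinearMap.apply ℝ ℝ (Pi.single j 1)).differentiableAt.comp x
    (differentiableAt_fderiv_of_contDiff_two hf x)

theorem pd_pd_eq_fderiv_fderiv {f : (Fin n → ℝ) → ℝ} (hf : ContDiff ℝ 2 f) (i j : Fin n)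
    (x : Fin n → ℝ) :
    pd i (pd j f) x = fderiv ℝ (fderiv ℝ f) x (Pi.single i 1) (Pi.single j 1) := by
  have h := (ContinuousLinearMap.apply ℝ ℝ (Pi.single j 1)).hasFDerivAt.comp x
    (differentiableAt_fderiv_of_contDiff_two hf x).hasFDerivAt
  rw [pd, pd_eq_apply_comp_fderiv, h.fderiv]
  rfl

theorem pd_pd_comm {f : (Fin n → ℝ) → ℝ} (hf : ContDiff ℝ 2 f) (i j : Fin n) (x : Fin n → ℝ) :
    pd i (pd j f) x = pd j (pd i f) x := by
  rw [pd_pd_eq_fderiv_fderiv hf, pd_pd_eq_fderiv_fderiv hf]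
  exact hf.contDiffAt.isSymmSndFDerivAt (by simp [minSmoothness_of_isRCLikeNormedField]) _ _

theorem pd_const_mul_pd {f : (Fin n → ℝ) → ℝ} (hf : ContDiff ℝ 2 f) (i j : Fin n) (c : ℝ)
    (x : Fin n → ℝ) : pd i (fun y => c * pd j f y) x = c * pd i (pd j f) x :=
  pd_const_mul (differentiableAt_pd hf j x) c

end PartialDerivatives

theorem eq_neg_inv_two_mul_mul_of_two_mul_mul_eq_neg {c a b : ℝ} (hc : c ≠ 0)
    (h : 2 * (c * a) = -b) : a = -(2 * c)⁻¹ * b := by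
  field_simp
  linarith

theorem taylor_proudman_R4_double_rotation_general
    (lam₁ lam₂ : ℝ) (h₁ : lam₁ ≠ 0) (h₂ : lam₂ ≠ 0)
    (u : (Fin 4 → ℝ) → (Fin 4 → ℝ))
    (Pr : (Fin 4 → ℝ) → ℝ) (hPr : ContDiff ℝ 2 Pr)
    (hbal : ∀ x : Fin 4 → ℝ,
      2 * (-lam₁ * u x 1) = -(pd 0 Pr x) ∧
      2 * (lam₁ * u x 0) = -(pd 1 Pr x) ∧
      2 * (-lam₂ * u x 3) = -(pd 2 Pr x) ∧
      2 * (lam₂ * u x 2) = -(pd 3 Pr x)) :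
    ∀ x : Fin 4 → ℝ,
      pd 0 (fun y => u y 0) x + pd 1 (fun y => u y 1) x = 0 ∧
      pd 2 (fun y => u y 2) x + pd 3 (fun y => u y 3) x = 0 ∧
      lam₁ * pd 2 (fun y => u y 0) x + lam₂ * pd 1 (fun y => u y 3) x = 0 ∧
      lam₁ * pd 2 (fun y => u y 1) x - lam₂ * pd 0 (fun y => u y 3) x = 0 ∧
      lam₁ * pd 3 (fun y => u y 0) x - lam₂ * pd 1 (fun y => u y 2) x = 0 ∧
      lam₁ * pd 3 (fun y => u y 1) x + lam₂ * pd 0 (fun y => u y 2) x = 0 := by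
  have hu₀ : (fun y => u y 0) = fun y => -(2 * lam₁)⁻¹ * pd 1 Pr y :=
    funext fun y => eq_neg_inv_two_mul_mul_of_two_mul_mul_eq_neg h₁ (hbal y).2.1
  have hu₁ : (fun y => u y 1) = fun y => -(2 * -lam₁)⁻¹ * pd 0 Pr y :=
    funext fun y => eq_neg_inv_two_mul_mul_of_two_mul_mul_eq_neg (neg_ne_zero.2 h₁) (hbal y).1
  have hu₂ : (fun y => u y 2) = fun y => -(2 * lam₂)⁻¹ * pd 3 Pr y :=
    funext fun y => eq_neg_inv_two_mul_mul_of_two_mul_mul_eq_neg h₂ (hbal y).2.2.2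
  have hu₃ : (fun y => u y 3) = fun y => -(2 * -lam₂)⁻¹ * pd 2 Pr y :=
    funext fun y => eq_neg_inv_two_mul_mul_of_two_mul_mul_eq_neg (neg_ne_zero.2 h₂) (hbal y).2.2.1
  intro x
  have hess_symm := fun i j => pd_pd_comm hPr i j x
  simp only [hu₀, hu₁, hu₂, hu₃, pd_const_mul_pd hPr]
  refine ⟨?_, ?_, ?_, ?_, ?_, ?_⟩
  · rw [hess_symm 0 1]; ring
  · rw [hess_symm 2 3]; ring
  · rw [hess_symm 2 1]; field_simp; ring
  · rw [hess_symm 2 0]; field_simp; ring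
  · rw [hess_symm 3 1]; field_simp; ring
  · rw [hess_symm 3 0]; field_simp; ring

/-- Taylor–Proudman theorem in `ℝ⁴` with simultaneously fast double
rotation (rates `λ₁` in the `x₁`-`x₂` plane and `λ₂` in the `x₃`-`x₄` plane, both
nonzero): geostrophic balance implies incompressibility within each rotating plane and
the four cross-plane relations (0-indexed coordinates). -/
theorem taylor_proudman_R4_double_rotation
    (lam₁ lam₂ : ℝ) (h₁ : lam₁ ≠ 0) (h₂ : lam₂ ≠ 0)
    (u : (Fin 4 → ℝ) → (Fin 4 → ℝ)) (hu : ContDiff ℝ 1 u)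
    (Pr : (Fin 4 → ℝ) → ℝ) (hPr : ContDiff ℝ 2 Pr)
    (hbal : ∀ x : Fin 4 → ℝ,
      2 * (-lam₁ * u x 1) = -(pd 0 Pr x) ∧
      2 * (lam₁ * u x 0) = -(pd 1 Pr x) ∧
      2 * (-lam₂ * u x 3) = -(pd 2 Pr x) ∧
      2 * (lam₂ * u x 2) = -(pd 3 Pr x)) :
    ∀ x : Fin 4 → ℝ,
      pd 0 (fun y => u y 0) x + pd 1 (fun y => u y 1) x = 0 ∧
      pd 2 (fun y => u y 2) x + pd 3 (fun y => u y 3) x = 0 ∧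
      lam₁ * pd 2 (fun y => u y 0) x + lam₂ * pd 1 (fun y => u y 3) x = 0 ∧
      lam₁ * pd 2 (fun y => u y 1) x - lam₂ * pd 0 (fun y => u y 3) x = 0 ∧
      lam₁ * pd 3 (fun y => u y 0) x - lam₂ * pd 1 (fun y => u y 2) x = 0 ∧
      lam₁ * pd 3 (fun y => u y 1) x + lam₂ * pd 0 (fun y => u y 2) x = 0 :=
  taylor_proudman_R4_double_rotation_general lam₁ lam₂ h₁ h₂ u Pr hPr hbal
end

section
/- Existence of the natural vortical (geostrophic) mode in ℝ⁴: for real numbers λ₁, λ₂ with λ₁ ≠ 0 and λ₂ ≠ 0 and any real wavevector (k₁, k₂, k₃, k₄), the nonzero complex vector (û₁, û₂, û₃, û₄, Π̂) = ( −i k₂/(2λ₁), i k₁/(2λ₁), −i k₄/(2λ₂), i k₃/(2λ₂), 1 ) lies in the kernel of the matrix M₀ obtained from the inertial-wave normal-mode matrix at frequency ϖ = 0, i.e., the 5 × 5 complex matrix with rows (0, −2λ₁, 0, 0, i k₁), (2λ₁, 0, 0, 0, i k₂), (0, 0, 0, −2λ₂, i k₃), (0, 0, 2λ₂, 0, i k₄),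 (k₁, k₂, k₃, k₄, 0). In particular M₀ is singular for every k, so ϖ = 0 is always a solution of the dispersion relation, with no condition on k. -/
/-!
The normal-mode matrix at `ϖ = 0` is the bordered matrix `[[Ω, i k], [kᵀ, 0]]`, where `Ω` is the
skew-symmetric Coriolis matrix. Taking `Π̂ = 1`, the momentum rows ask for `Ω û = -i k`, which
the geostrophic velocity solves; the continuity row `k ⬝ û = 0` then holds automatically, because
`i (k ⬝ û) = -(Ω û) ⬝ û` vanishes by skew-symmetry. A nonzero kernel vector forces `det = 0`.
-/

open Complex Matrix

section SkewSymmetric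

variable {n R : Type*} [Fintype n] [CommRing R]

theorem dotProduct_mulVec_self_eq_zero_of_transpose_eq_neg [IsAddTorsionFree R]
    {Ω : Matrix n n R} (hΩ : Ωᵀ = -Ω) (u : n → R) : u ⬝ᵥ Ω *ᵥ u = 0 := by
  refine self_eq_neg.mp ?_
  calc u ⬝ᵥ Ω *ᵥ u = Ωᵀ *ᵥ u ⬝ᵥ u := by rw [dotProduct_mulVec, mulVec_transpose]
    _ = -(u ⬝ᵥ Ω *ᵥ u) := by rw [hΩ, neg_mulVec, neg_dotProduct, dotProduct_comm]

theorem fromBlocks_mulVec_sumElim_eq_zero [IsAddTorsionFree R] [NoZeroDivisors R]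
    {Ω : Matrix n n R} (hΩ : Ωᵀ = -Ω) {c : R} (hc : c ≠ 0) {k u : n → R}
    (hu : Ω *ᵥ u = -(c • k)) :
    fromBlocks Ω (replicateCol (Fin 1) (c • k)) (replicateRow (Fin 1) k) 0 *ᵥ
      Sum.elim u 1 = 0 := by
  have hku : k ⬝ᵥ u = 0 := by
    refine (mul_eq_zero.mp ?_).resolve_left hc
    rw [← smul_eq_mul, ← smul_dotProduct, ← neg_eq_zero, ← neg_dotProduct, ← hu,
      dotProduct_comm]
    exact dotProduct_mulVec_self_eq_zero_of_transpose_eq_neg hΩ u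
  ext (i | i)
  · have hi := congrFun hu i
    simp only [mulVec, dotProduct] at hi ⊢
    simp [Fintype.sum_sum_type, hi]
  · simpa [mulVec, dotProduct, Fintype.sum_sum_type] using hku

end SkewSymmetric

theorem Matrix.submatrix_mulVec_comp_eq_zero {m n R : Type*} [Fintype m] [Fintype n]
    [CommRing R] (e : m ≃ n) {M : Matrix n n R} {v : n → R} (h : M *ᵥ v = 0) :
    M.submatrix e e *ᵥ (v ∘ e) = 0 := by
  rw [submatrix_mulVec_equiv, Function.comp_assoc, e.self_comp_symm, Function.comp_id, h]
  rfl

section Rotation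

variable {K : Type*} [Field K]

def coriolisMatrix (a b : K) : Matrix (Fin 4) (Fin 4) K :=
  !![0, -2 * a, 0, 0; 2 * a, 0, 0, 0; 0, 0, 0, -2 * b; 0, 0, 2 * b, 0]

def geostrophicVelocity (c a b : K) (k : Fin 4 → K) : Fin 4 → K :=
  ![-(c * k 1) / (2 * a), c * k 0 / (2 * a), -(c * k 3) / (2 * b), c * k 2 / (2 * b)]

theorem coriolisMatrix_transpose (a b : K) : (coriolisMatrix a b)ᵀ = -coriolisMatrix a b := by
  ext i j
  fin_cases i <;> fin_cases j <;> simp [coriolisMatrix]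

theorem coriolisMatrix_mulVec_geostrophicVelocity [NeZero (2 : K)] (c : K) {a b : K}
    (ha : a ≠ 0) (hb : b ≠ 0) (k : Fin 4 → K) :
    coriolisMatrix a b *ᵥ geostrophicVelocity c a b k = -(c • k) := by
  ext i
  fin_cases i <;>
    simp [coriolisMatrix, geostrophicVelocity, mulVec, dotProduct, Fin.sum_univ_four] <;>
    field_simp

end Rotation

/-- Existence of the natural vortical (geostrophic) mode in `ℝ⁴`: for
nonzero rotation rates `λ₁, λ₂` and any wavevector `k`, the explicit nonzero vector
`(û, Π̂) = (-ik₂/(2λ₁), ik₁/(2λ₁), -ik₄/(2λ₂), ik₃/(2λ₂), 1)` lies in the kernel of the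
normal-mode matrix at frequency `ϖ = 0`; in particular that matrix is singular for every
`k`, so `ϖ = 0` always solves the dispersion relation. -/
theorem vortical_mode_exists_R4
    (lam₁ lam₂ : ℝ) (h₁ : lam₁ ≠ 0) (h₂ : lam₂ ≠ 0) (k₁ k₂ k₃ k₄ : ℝ) :
    (!![(0 : ℂ), -2 * (lam₁ : ℂ), 0, 0, Complex.I * (k₁ : ℂ);
        2 * (lam₁ : ℂ), 0, 0, 0, Complex.I * (k₂ : ℂ);
        0, 0, 0, -2 * (lam₂ : ℂ), Complex.I * (k₃ : ℂ);
        0, 0, 2 * (lam₂ : ℂ), 0, Complex.I * (k₄ : ℂ);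
        (k₁ : ℂ), (k₂ : ℂ), (k₃ : ℂ), (k₄ : ℂ), 0]).mulVec
      ![-(Complex.I * (k₂ : ℂ)) / (2 * (lam₁ : ℂ)),
        Complex.I * (k₁ : ℂ) / (2 * (lam₁ : ℂ)),
        -(Complex.I * (k₄ : ℂ)) / (2 * (lam₂ : ℂ)),
        Complex.I * (k₃ : ℂ) / (2 * (lam₂ : ℂ)), 1] = 0 ∧
    (![-(Complex.I * (k₂ : ℂ)) / (2 * (lam₁ : ℂ)),
        Complex.I * (k₁ : ℂ) / (2 * (lam₁ : ℂ)),
        -(Complex.I * (k₄ : ℂ)) / (2 * (lam₂ : ℂ)),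
        Complex.I * (k₃ : ℂ) / (2 * (lam₂ : ℂ)), 1] : Fin 5 → ℂ) ≠ 0 ∧
    (!![(0 : ℂ), -2 * (lam₁ : ℂ), 0, 0, Complex.I * (k₁ : ℂ);
        2 * (lam₁ : ℂ), 0, 0, 0, Complex.I * (k₂ : ℂ);
        0, 0, 0, -2 * (lam₂ : ℂ), Complex.I * (k₃ : ℂ);
        0, 0, 2 * (lam₂ : ℂ), 0, Complex.I * (k₄ : ℂ);
        (k₁ : ℂ), (k₂ : ℂ), (k₃ : ℂ), (k₄ : ℂ), 0]).det = 0 := by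
  have hker := submatrix_mulVec_comp_eq_zero finSumFinEquiv.symm
    (fromBlocks_mulVec_sumElim_eq_zero (coriolisMatrix_transpose _ _) I_ne_zero
      (coriolisMatrix_mulVec_geostrophicVelocity I (ofReal_ne_zero.mpr h₁)
        (ofReal_ne_zero.mpr h₂) ![(k₁ : ℂ), k₂, k₃, k₄]))
  refine ⟨?ker, ?ne, exists_mulVec_eq_zero_iff.mp ⟨_, ?ne, ?ker⟩⟩
  case ker =>
    convert hker using 2
    · ext i j
      fin_cases i <;> fin_cases j <;> rfl
    · ext i
      fin_cases i <;> rfl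
  case ne => exact fun h => one_ne_zero (congrFun h 4)
end
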